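/- Bias-variance decomposition of the expected KL divergence (first equality of Theorem 1, deterministic-plus-expectation form): let (Ω, 𝔽, μ) be a probability space, p* a strictly positive probability distribution on S, θ_Q : B → ℝ a parameter whose Gibbs distribution Q = p(·;θ_Q) matches p* in expectation parameters over B (Σ_{x ∈ S} ζ(s,x) Q(x) = Σ_{x ∈ S} ζ(s,x) p*(x) for all s ∈ B), and Θ̂ : Ω → (B → ℝ) a measurable random parameter such that ω ↦ D_KL(p*, p(·;Θ̂(ω))) is integrable. Then ∫ D_KL(p*, p(·;Θ̂(ω))) dμ(ω) = D_KL(p*, Q) + ∫ D_KL(Q, p(·;Θ̂(ω))) dμ(ω). -/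
import Mathlib


open Finset

/-- ζ(s,x) = 1 if s ⊆ x and 0 otherwise. -/
noncomputable def zeta {V : Type*} [DecidableEq V] (s x : Finset V) : ℝ :=
  if s ⊆ x then 1 else 0

/-- The log-partition function ψ(θ) = log Σ_{x ∈ S} exp(Σ_{s ∈ B} ζ(s,x) θ(s)). -/
noncomputable def psi {V : Type*} [DecidableEq V] (S B : Finset (Finset V))
    (θ : Finset V → ℝ) : ℝ :=
  Real.log (∑ x ∈ S, Real.exp (∑ s ∈ B, zeta s x * θ s))

/-- The Gibbs probability p(x;θ) = exp(Σ_{s ∈ B} ζ(s,x) θ(s) − ψ(θ)). -/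
noncomputable def gibbs {V : Type*} [DecidableEq V] (S B : Finset (Finset V))
    (θ : Finset V → ℝ) (x : Finset V) : ℝ :=
  Real.exp (∑ s ∈ B, zeta s x * θ s - psi S B θ)

/-- The expectation parameter η(y;θ) = Σ_{x ∈ S} ζ(y,x) p(x;θ). -/
noncomputable def eta {V : Type*} [DecidableEq V] (S B : Finset (Finset V))
    (θ : Finset V → ℝ) (y : Finset V) : ℝ :=
  ∑ x ∈ S, zeta y x * gibbs S B θ x
/-- The Kullback–Leibler divergence between two distributions on S. -/
noncomputable def klDiv {V : Type*} [DecidableEq V] (S : Finset (Finset V))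
    (u v : Finset V → ℝ) : ℝ :=
  ∑ x ∈ S, u x * Real.log (u x / v x)

lemma gibbs_pos {V : Type*} [DecidableEq V] (S B : Finset (Finset V))
    (θ : Finset V → ℝ) (x : Finset V) : 0 < gibbs S B θ x := Real.exp_pos _

lemma sum_gibbs {V : Type*} [DecidableEq V] (S B : Finset (Finset V)) (hS : S.Nonempty)
    (θ : Finset V → ℝ) : ∑ x ∈ S, gibbs S B θ x = 1 := by
  have hT : 0 < ∑ x ∈ S, Real.exp (∑ s ∈ B, zeta s x * θ s) :=
    Finset.sum_pos (fun x _ => Real.exp_pos _) hS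
  simp only [gibbs, psi, Real.exp_sub, Real.exp_log hT]
  rw [← Finset.sum_div, div_self (ne_of_gt hT)]

lemma sum_mul_log_gibbs {V : Type*} [DecidableEq V] (S B : Finset (Finset V))
    (θ : Finset V → ℝ) (u w : Finset V → ℝ)
    (hu : ∑ x ∈ S, u x = 1) (hw : ∑ x ∈ S, w x = 1)
    (h : ∀ s ∈ B, ∑ x ∈ S, zeta s x * u x = ∑ x ∈ S, zeta s x * w x) :
    ∑ x ∈ S, u x * Real.log (gibbs S B θ x)
      = ∑ x ∈ S, w x * Real.log (gibbs S B θ x) := by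
  have key : ∀ v : Finset V → ℝ, ∑ x ∈ S, v x * Real.log (gibbs S B θ x)
      = ∑ s ∈ B, (∑ x ∈ S, zeta s x * v x) * θ s - (∑ x ∈ S, v x) * psi S B θ := by
    intro v
    simp only [gibbs, Real.log_exp, mul_sub, Finset.sum_sub_distrib, Finset.mul_sum,
      Finset.sum_mul]
    rw [Finset.sum_comm]
    congr 1
    · apply Finset.sum_congr rfl; intro s _; apply Finset.sum_congr rfl; intro x _; ring
  rw [key, key, hu, hw]
  congr 1
  apply Finset.sum_congr rfl
  intro s hs
  rw [h s hs]

lemma pythagorean {V : Type*} [DecidableEq V] (S B : Finset (Finset V)) (hS : S.Nonempty)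
    (pstar : Finset V → ℝ) (hpos : ∀ x ∈ S, 0 < pstar x)
    (hsum : ∑ x ∈ S, pstar x = 1)
    (θQ θ : Finset V → ℝ)
    (hmatch : ∀ s ∈ B,
      ∑ x ∈ S, zeta s x * gibbs S B θQ x = ∑ x ∈ S, zeta s x * pstar x) :
    klDiv S pstar (gibbs S B θ)
      = klDiv S pstar (gibbs S B θQ) + klDiv S (gibbs S B θQ) (gibbs S B θ) := by
  have expand : ∀ (u g : Finset V → ℝ), (∀ x ∈ S, 0 < u x) → (∀ x ∈ S, 0 < g x) →
      klDiv S u g = ∑ x ∈ S, u x * Real.log (u x) - ∑ x ∈ S, u x * Real.log (g x) := by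
    intro u g hu hg
    rw [klDiv, ← Finset.sum_sub_distrib]
    apply Finset.sum_congr rfl
    intro x hx
    rw [Real.log_div (ne_of_gt (hu x hx)) (ne_of_gt (hg x hx))]
    ring
  have hQsum := sum_gibbs S B hS θQ
  have hQpos : ∀ x ∈ S, 0 < gibbs S B θQ x := fun x _ => gibbs_pos S B θQ x
  have hgpos : ∀ x ∈ S, 0 < gibbs S B θ x := fun x _ => gibbs_pos S B θ x
  have hm' : ∀ θ' : Finset V → ℝ,
      ∑ x ∈ S, pstar x * Real.log (gibbs S B θ' x)
        = ∑ x ∈ S, gibbs S B θQ x * Real.log (gibbs S B θ' x) := by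
    intro θ'
    exact sum_mul_log_gibbs S B θ' pstar (gibbs S B θQ) hsum hQsum
      (fun s hs => by rw [hmatch s hs])
  rw [expand pstar (gibbs S B θ) hpos hgpos,
      expand pstar (gibbs S B θQ) hpos hQpos,
      expand (gibbs S B θQ) (gibbs S B θ) hQpos hgpos,
      hm' θ, hm' θQ]
  ring

open MeasureTheory in
/-- Bias-variance decomposition of the expected KL divergence: if the Gibbs
distribution Q = p(·;θQ) matches the true distribution p* in all expectation
parameters over B, then for a measurable random parameter Θ̂,
E[D_KL(p*, P_Θ̂)] = D_KL(p*, Q) + E[D_KL(Q, P_Θ̂)]. -/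
theorem expected_kl_bias_variance {V : Type*} [Fintype V] [DecidableEq V]
    (S B : Finset (Finset V)) (hS : S.Nonempty)
    (pstar : Finset V → ℝ) (hpos : ∀ x ∈ S, 0 < pstar x)
    (hsum : ∑ x ∈ S, pstar x = 1)
    (θQ : Finset V → ℝ)
    (hmatch : ∀ s ∈ B,
      ∑ x ∈ S, zeta s x * gibbs S B θQ x = ∑ x ∈ S, zeta s x * pstar x)
    {Ω : Type*} [MeasurableSpace Ω] (μ : Measure Ω) [IsProbabilityMeasure μ]
    (Θ : Ω → Finset V → ℝ) (hmeas : Measurable Θ)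
    (hint : Integrable (fun ω => klDiv S pstar (gibbs S B (Θ ω))) μ) :
    ∫ ω, klDiv S pstar (gibbs S B (Θ ω)) ∂μ
      = klDiv S pstar (gibbs S B θQ)
        + ∫ ω, klDiv S (gibbs S B θQ) (gibbs S B (Θ ω)) ∂μ := by
  have hpt : ∀ ω, klDiv S (gibbs S B θQ) (gibbs S B (Θ ω))
      = klDiv S pstar (gibbs S B (Θ ω)) - klDiv S pstar (gibbs S B θQ) := by
    intro ω
    have := pythagorean S B hS pstar hpos hsum θQ (Θ ω) hmatch
    linarith
  simp only [hpt]
  rw [MeasureTheory.integral_sub hint (MeasureTheory.integrable_const _),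
    MeasureTheory.integral_const]
  simp [measure_univ]
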